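/- arXiv:quant-ph/0308109 — 5 statements merged into one kernel-verified Lean document; each statement's English description precedes it below -/
import Mathlib

section
/- Every non-negative integer n is an eigenvalue of the number operator H = a⁺ ∘ a⁻ acting on C(ℤ_p, ℚ_p): there exists a nonzero f ∈ C(ℤ_p, ℚ_p) with Hf = n·f. -/
/-- The raising operator `a⁺`: `(a⁺ f)(x) = x · f(x - 1)`. -/
noncomputable def aPlus (p : ℕ) [Fact p.Prime] (f : ℤ_[p] → ℚ_[p]) (x : ℤ_[p]) : ℚ_[p] :=
  (x : ℚ_[p]) * f (x - 1)

/-- The lowering operator `a⁻`: `(a⁻ f)(x) = f(x + 1) - f(x)`. -/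
noncomputable def aMinus (p : ℕ) [Fact p.Prime] (f : ℤ_[p] → ℚ_[p]) (x : ℤ_[p]) : ℚ_[p] :=
  f (x + 1) - f x

/-- The number operator `H = a⁺ ∘ a⁻`. -/
noncomputable def numberOp (p : ℕ) [Fact p.Prime] (f : ℤ_[p] → ℚ_[p]) : ℤ_[p] → ℚ_[p] :=
  aPlus p (aMinus p f)

lemma falling_key {K : Type*} [Field K] (n : ℕ) (x : K) :
    x * ∏ k ∈ Finset.range n, ((x - 1) - k) =
      (x - n) * ∏ k ∈ Finset.range n, (x - k) := by
  induction n with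
  | zero => simp
  | succ n ih =>
    rw [Finset.prod_range_succ, Finset.prod_range_succ, ← mul_assoc, ih]
    push_cast
    ring

/-- Every non-negative integer `n` is an eigenvalue of `H = a⁺ ∘ a⁻` on `C(ℤ_[p], ℚ_[p])`:
there is a nonzero continuous `f` with `H f = n · f`. -/
theorem numberOp_eigenvalue_nat (p : ℕ) [Fact p.Prime] (n : ℕ) :
    ∃ f : C(ℤ_[p], ℚ_[p]), f ≠ 0 ∧ ∀ x : ℤ_[p], numberOp p (⇑f) x = (n : ℚ_[p]) * f x := by
  refine ⟨⟨fun x => ∏ k ∈ Finset.range n, ((x : ℚ_[p]) - k), continuous_finset_prod _ fun k _ => continuous_subtype_val.sub continuous_const⟩, ?_, ?_⟩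
  · intro h
    have h2 : ∏ k ∈ Finset.range n, (((n : ℤ_[p]) : ℚ_[p]) - k) = 0 := by
      have := ContinuousMap.congr_fun h (n : ℤ_[p])
      simpa using this
    rw [Finset.prod_eq_zero_iff] at h2
    obtain ⟨k, hk, hk0⟩ := h2
    have : (n : ℚ_[p]) = (k : ℚ_[p]) := by
      push_cast at hk0
      exact sub_eq_zero.mp hk0
    exact absurd (Nat.cast_injective this) (Finset.mem_range.mp hk).ne'
  · intro x
    simp only [numberOp, aPlus, aMinus, ContinuousMap.coe_mk]
    have key := falling_key n ((x : ℚ_[p]))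
    have hsub : ∀ k : ℕ, (((x - 1 : ℤ_[p]) : ℚ_[p]) - k) = (((x : ℚ_[p]) - 1) - k) := by
      intro k; push_cast; ring
    have hadd : (((x - 1 + 1 : ℤ_[p]) : ℚ_[p])) = (x : ℚ_[p]) := by push_cast; ring
    have e1 : ∏ k ∈ Finset.range n, (((x - 1 + 1 : ℤ_[p]) : ℚ_[p]) - k)
        = ∏ k ∈ Finset.range n, ((x : ℚ_[p]) - k) := by
      apply Finset.prod_congr rfl; intro k _; rw [hadd]
    have e2 : ∏ k ∈ Finset.range n, (((x - 1 : ℤ_[p]) : ℚ_[p]) - k)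
        = ∏ k ∈ Finset.range n, (((x : ℚ_[p]) - 1) - k) := by
      apply Finset.prod_congr rfl; intro k _; rw [hsub]
    rw [e1, e2, mul_sub, key]
    ring
end

section
/- The point spectrum of the number operator H = a⁺ ∘ a⁻ is exactly the set of non-negative integers: if f ∈ C(ℤ_p, ℚ_p) is nonzero and Hf = λ·f for some λ ∈ ℚ_p, then λ is (the image in ℚ_p of) a non-negative integer. -/
/-- The point spectrum of `H = a⁺ ∘ a⁻` consists exactly of the non-negative integers:
if a nonzero continuous `f` satisfies `H f = λ · f`, then `λ` is (the image in `ℚ_[p]` of)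
a non-negative integer. -/
theorem numberOp_eigenvalue_is_nat (p : ℕ) [Fact p.Prime] (f : C(ℤ_[p], ℚ_[p]))
    (hf : f ≠ 0) (lam : ℚ_[p]) (h : ∀ x : ℤ_[p], numberOp p (⇑f) x = lam * f x) :
    ∃ n : ℕ, lam = (n : ℚ_[p]) := by
  by_contra hlam
  push_neg at hlam
  -- show f vanishes on all naturals
  have key : ∀ n : ℕ, f (n : ℤ_[p]) = 0 := by
    intro n
    induction n with
    | zero =>
      have h0 := h 0
      simp only [numberOp, aPlus, aMinus] at h0
      push_cast at h0
      simp at h0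
      rcases h0.symm with h0 | h0
      · exact_mod_cast h0
      · exact absurd (by exact_mod_cast h0) (hlam 0)
    | succ n ih =>
      have h1 := h ((n : ℤ_[p]) + 1)
      simp only [numberOp, aPlus, aMinus, add_sub_cancel_right] at h1
      rw [ih] at h1
      have hcast : (((n : ℤ_[p]) + 1 : ℤ_[p]) : ℚ_[p]) = ((n + 1 : ℕ) : ℚ_[p]) := by
        push_cast; ring
      rw [hcast] at h1
      have hne : ((n + 1 : ℕ) : ℚ_[p]) - lam ≠ 0 := by
        intro hc
        exact hlam (n + 1) (by linear_combination -hc)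
      have : (((n + 1 : ℕ) : ℚ_[p]) - lam) * f ((n : ℤ_[p]) + 1) = 0 := by
        ring_nf
        ring_nf at h1
        linear_combination h1
      have := (mul_eq_zero.mp this).resolve_left hne
      simpa [Nat.cast_succ] using this
  apply hf
  ext x
  have hd : Dense (Set.range ((↑) : ℕ → ℤ_[p])) := PadicInt.denseRange_natCast
  have := Continuous.ext_on hd f.continuous continuous_const
    (fun y hy => by rcases hy with ⟨n, rfl⟩; exact key n)
  exact congrFun this x
end

section
/- For each non-negative integer n, the eigenspace of the number operator H = a⁺ ∘ a⁻ for the eigenvalue n is one-dimensional: every f ∈ C(ℤ_p, ℚ_p) with Hf = n·f is a scalar multiple of the Mahler basis function P_n. -/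
/-- The Mahler basis function `P_n(x) = x (x-1) ⋯ (x - n + 1) / n!` (with `P_0 = 1`). -/
noncomputable def mahlerP (p : ℕ) [Fact p.Prime] (n : ℕ) (x : ℤ_[p]) : ℚ_[p] :=
  (∏ i ∈ Finset.range n, ((x : ℚ_[p]) - (i : ℚ_[p]))) / (n.factorial : ℚ_[p])

lemma prod_rec_aux {K : Type*} [Field K] (n : ℕ) (y : K) :
    (y - (n : K)) * ∏ i ∈ Finset.range n, (y - (i : K))
      = y * ∏ i ∈ Finset.range n, (y - 1 - (i : K)) := by
  have h1 : (y - (n : K)) * ∏ i ∈ Finset.range n, (y - (i : K))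
      = ∏ i ∈ Finset.range (n + 1), (y - (i : K)) := by
    rw [Finset.prod_range_succ]; ring
  have h2 : ∏ i ∈ Finset.range (n + 1), (y - (i : K))
      = (∏ i ∈ Finset.range n, (y - ((i : K) + 1))) * (y - (0 : ℕ)) := by
    rw [Finset.prod_range_succ']
    push_cast
    ring_nf
  rw [h1, h2]
  push_cast
  rw [mul_comm]
  congr 1
  · ring
  · exact Finset.prod_congr rfl fun i _ => by ring

lemma mahlerP_rec (p : ℕ) [Fact p.Prime] (n : ℕ) (x : ℤ_[p]) :
    ((x : ℚ_[p]) - (n : ℚ_[p])) * mahlerP p n x = (x : ℚ_[p]) * mahlerP p n (x - 1) := by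
  have key : ∏ i ∈ Finset.range n, (((x - 1 : ℤ_[p]) : ℚ_[p]) - (i : ℚ_[p]))
      = ∏ i ∈ Finset.range n, ((x : ℚ_[p]) - 1 - (i : ℚ_[p])) :=
    Finset.prod_congr rfl fun i _ => by push_cast; ring
  rw [mahlerP, mahlerP, key, ← mul_div_assoc, ← mul_div_assoc, prod_rec_aux]

lemma mahlerP_self (p : ℕ) [Fact p.Prime] (n : ℕ) :
    mahlerP p n ((n : ℕ) : ℤ_[p]) = 1 := by
  have key : ∏ i ∈ Finset.range n, ((((n : ℕ) : ℤ_[p]) : ℚ_[p]) - (i : ℚ_[p]))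
      = ((n.factorial : ℕ) : ℚ_[p]) := by
    rw [show ((n.factorial : ℕ) : ℚ_[p]) = ((n.descFactorial n : ℕ) : ℚ_[p]) by
      rw [Nat.descFactorial_self]]
    rw [Nat.descFactorial_eq_prod_range, Nat.cast_prod]
    refine Finset.prod_congr rfl fun i hi => ?_
    have hle : i ≤ n := (Finset.mem_range.1 hi).le
    rw [Nat.cast_sub hle]
    push_cast
    ring
  rw [mahlerP, key, div_self (by exact_mod_cast n.factorial_ne_zero)]

lemma mahlerP_eq_zero (p : ℕ) [Fact p.Prime] {n m : ℕ} (hm : m < n) :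
    mahlerP p n ((m : ℕ) : ℤ_[p]) = 0 := by
  rw [mahlerP, Finset.prod_eq_zero (Finset.mem_range.2 hm) (by push_cast; ring), zero_div]

/-- For each `n ≥ 0`, the eigenspace of `H = a⁺ ∘ a⁻` for the eigenvalue `n` is
one-dimensional: every continuous `f` with `H f = n · f` is a scalar multiple of `P_n`. -/
theorem numberOp_eigenspace_one_dimensional (p : ℕ) [Fact p.Prime] (n : ℕ)
    (f : C(ℤ_[p], ℚ_[p])) (h : ∀ x : ℤ_[p], numberOp p (⇑f) x = (n : ℚ_[p]) * f x) :
    ∃ c : ℚ_[p], ∀ x : ℤ_[p], f x = c * mahlerP p n x := by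
  set c : ℚ_[p] := f ((n : ℕ) : ℤ_[p]) with hc
  refine ⟨c, ?_⟩
  have hrec : ∀ x : ℤ_[p], ((x : ℚ_[p]) - (n : ℚ_[p])) * f x = (x : ℚ_[p]) * f (x - 1) := by
    intro x
    have hx := h x
    simp only [numberOp, aPlus, aMinus, sub_add_cancel] at hx
    linear_combination hx
  have key : ∀ m : ℕ, f ((m : ℕ) : ℤ_[p]) = c * mahlerP p n ((m : ℕ) : ℤ_[p]) := by
    intro m
    induction m with
    | zero =>
      cases n with
      | zero =>
        simp [mahlerP, hc]
      | succ k =>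
        have h0 := hrec ((0 : ℕ) : ℤ_[p])
        have hne : ((k : ℚ_[p]) + 1) ≠ 0 := by
          exact_mod_cast (Nat.cast_ne_zero (R := ℚ_[p])).2 (Nat.succ_ne_zero k)
        push_cast at h0
        have hf0 : f ((0 : ℕ) : ℤ_[p]) = 0 := by
          have : (0 - ((k : ℚ_[p]) + 1)) * f 0 = 0 := by
            linear_combination h0
          rcases mul_eq_zero.1 this with h2 | h2
          · exact absurd (by linear_combination -h2) hne
          · exact h2
        rw [hf0, mahlerP_eq_zero p (Nat.succ_pos k)]
        ring
    | succ m ih =>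
      by_cases hmn : m + 1 = n
      · subst hmn
        rw [mahlerP_self p (m + 1)]
        ring
      · have hne : (((m + 1 : ℕ) : ℚ_[p]) - (n : ℚ_[p])) ≠ 0 := by
          refine sub_ne_zero.2 ?_
          exact_mod_cast hmn
        have hr := hrec (((m + 1 : ℕ) : ℕ) : ℤ_[p])
        have hq := mahlerP_rec p n (((m + 1 : ℕ) : ℕ) : ℤ_[p])
        have hsub : (((m + 1 : ℕ) : ℕ) : ℤ_[p]) - 1 = ((m : ℕ) : ℤ_[p]) := by push_cast; ring
        rw [hsub] at hr hq
        apply mul_left_cancel₀ hne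
        push_cast at hr hq ih ⊢
        linear_combination hr + ((m : ℚ_[p]) + 1) * ih - c * hq
  have contg : Continuous fun x : ℤ_[p] => c * mahlerP p n x := by
    apply Continuous.mul continuous_const
    unfold mahlerP
    apply Continuous.div_const
    apply continuous_finset_prod
    intro i _
    exact Continuous.sub continuous_subtype_val continuous_const
  have heq : ⇑f = fun x : ℤ_[p] => c * mahlerP p n x := by
    refine PadicInt.denseRange_natCast.equalizer f.continuous contg (funext fun m => ?_)
    exact key m
  intro x
  exact congrFun heq x
end

section
/- The spectrum of the number operator H = a⁺ ∘ a⁻, viewed as an element of the ℚ_p-algebra of continuous linear endomorphisms of C(ℤ_p, ℚ_p), is equal to the image of ℤ_p in ℚ_p (the closure of the non-negative integers in ℚ_p): H − λ·id fails to be invertible exactly for λ in the image of ℤ_p. -/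
/-!
Since `|x| ≤ 1` on `ℤ_[p]` and the ultrametric inequality bounds forward differences by the
sup-norm, `‖a⁺a⁻‖ ≤ 1`; hence the spectrum lies in the closed unit ball of `ℚ_[p]`, which is
`ℤ_[p]`. Conversely, the falling factorial `x (x - 1) ⋯ (x - n + 1)` is an eigenvector of `a⁺a⁻`
with eigenvalue `n`, and as the spectrum is closed and `ℕ` is dense in `ℤ_[p]`, it contains `ℤ_[p]`.
-/

open Polynomial fwdDiff

theorem X_mul_sub_comp_X_sub_one_descPochhammer (R : Type*) [CommRing R] (n : ℕ) :
    X * (descPochhammer R n - (descPochhammer R n).comp (X - 1)) =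
      (n : R[X]) * descPochhammer R n := by
  cases n with
  | zero => simp
  | succ n =>
    rw [descPochhammer_succ_comp_X_sub_one, sub_sub_cancel, descPochhammer_succ_left, smul_eq_mul]
    push_cast
    ring

theorem ContinuousLinearMap.mem_spectrum_of_apply_eq_smul {𝕜 E : Type*}
    [NontriviallyNormedField 𝕜] [NormedAddCommGroup E] [NormedSpace 𝕜 E] [CompleteSpace E]
    {T : E →L[𝕜] E} {μ : 𝕜} {v : E} (hv : v ≠ 0) (hTv : T v = μ • v) : μ ∈ spectrum 𝕜 T :=
  spectrum_eq (f := T) ▸ (Module.End.hasEigenvalue_of_hasEigenvector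
    ⟨Module.End.mem_eigenspace_iff.2 hTv, hv⟩).mem_spectrum

theorem PadicInt.spectrum_subset_range_coe_of_norm_le_one {p : ℕ} [Fact p.Prime] {A : Type*}
    [NormedRing A] [NormedAlgebra ℚ_[p] A] [CompleteSpace A] [NormOneClass A] {a : A}
    (ha : ‖a‖ ≤ 1) : spectrum ℚ_[p] a ⊆ Set.range ((↑) : ℤ_[p] → ℚ_[p]) :=
  fun μ hμ => ⟨⟨μ, (spectrum.norm_le_norm_of_mem hμ).trans ha⟩, rfl⟩

theorem PadicInt.range_coe_subset_closure_range_natCast {p : ℕ} [Fact p.Prime] :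
    Set.range ((↑) : ℤ_[p] → ℚ_[p]) ⊆ closure (Set.range ((↑) : ℕ → ℚ_[p])) := by
  rintro _ ⟨z, rfl⟩
  refine map_mem_closure continuous_subtype_val (PadicInt.denseRange_natCast z) ?_
  rintro _ ⟨n, rfl⟩
  exact ⟨n, PadicInt.coe_natCast n⟩

theorem PadicInt.range_coe_subset_spectrum {p : ℕ} [Fact p.Prime] {A : Type*} [NormedRing A]
    [NormedAlgebra ℚ_[p] A] [CompleteSpace A] {a : A}
    (ha : ∀ n : ℕ, (n : ℚ_[p]) ∈ spectrum ℚ_[p] a) :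
    Set.range ((↑) : ℤ_[p] → ℚ_[p]) ⊆ spectrum ℚ_[p] a :=
  range_coe_subset_closure_range_natCast.trans <|
    (spectrum.isClosed a).closure_subset_iff.2 <| Set.range_subset_iff.2 ha

section NumberOperator

variable (p : ℕ) [Fact p.Prime]

theorem aMinus_eq_fwdDiff (f : ℤ_[p] → ℚ_[p]) : aMinus p f = Δ_[1] f := rfl

theorem norm_aPlus_aMinus_apply_le (f : C(ℤ_[p], ℚ_[p])) (x : ℤ_[p]) :
    ‖aPlus p (aMinus p f) x‖ ≤ ‖f‖ := by
  rw [aPlus, norm_mul, aMinus_eq_fwdDiff]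
  exact (mul_le_of_le_one_left (norm_nonneg _) x.2).trans
    (IsUltrametricDist.norm_fwdDiff_iter_apply_le 1 f _ 1)

noncomputable def descPochhammerMap (n : ℕ) : C(ℤ_[p], ℚ_[p]) :=
  ⟨fun x => (descPochhammer ℚ_[p] n).eval (x : ℚ_[p]), by fun_prop⟩

theorem descPochhammerMap_ne_zero (n : ℕ) : descPochhammerMap p n ≠ 0 := by
  refine DFunLike.ne_iff.2 ⟨(n : ℤ_[p]), ?_⟩
  simp [descPochhammerMap, descPochhammer_eval_eq_descFactorial]

theorem aPlus_aMinus_descPochhammerMap (n : ℕ) (x : ℤ_[p]) :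
    aPlus p (aMinus p (descPochhammerMap p n)) x = n * descPochhammerMap p n x := by
  simpa [aPlus, aMinus, descPochhammerMap, eval_comp] using
    congrArg (eval (x : ℚ_[p])) (X_mul_sub_comp_X_sub_one_descPochhammer ℚ_[p] n)

variable {p}

theorem norm_le_one_of_apply_eq_aPlus_aMinus {H : C(ℤ_[p], ℚ_[p]) →L[ℚ_[p]] C(ℤ_[p], ℚ_[p])}
    (hH : ∀ (f : C(ℤ_[p], ℚ_[p])) (x : ℤ_[p]), H f x = aPlus p (aMinus p (⇑f)) x) : ‖H‖ ≤ 1 :=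
  H.opNorm_le_bound zero_le_one fun f => by
    rw [one_mul, ContinuousMap.norm_le _ (norm_nonneg f)]
    intro x
    rw [hH]
    exact norm_aPlus_aMinus_apply_le p f x

theorem natCast_mem_spectrum_of_apply_eq_aPlus_aMinus
    {H : C(ℤ_[p], ℚ_[p]) →L[ℚ_[p]] C(ℤ_[p], ℚ_[p])}
    (hH : ∀ (f : C(ℤ_[p], ℚ_[p])) (x : ℤ_[p]), H f x = aPlus p (aMinus p (⇑f)) x) (n : ℕ) :
    (n : ℚ_[p]) ∈ spectrum ℚ_[p] H := by
  refine ContinuousLinearMap.mem_spectrum_of_apply_eq_smul (descPochhammerMap_ne_zero p n) ?_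
  ext x
  rw [hH, aPlus_aMinus_descPochhammerMap, ContinuousMap.smul_apply, smul_eq_mul]

end NumberOperator

/-- The spectrum of the number operator `H = a⁺ ∘ a⁻`, viewed as an element of the
`ℚ_[p]`-algebra of continuous linear endomorphisms of `C(ℤ_[p], ℚ_[p])`, is exactly the
image of `ℤ_[p]` in `ℚ_[p]` (the closure of the non-negative integers in `ℚ_[p]`). -/
theorem numberOp_spectrum (p : ℕ) [Fact p.Prime]
    (H : C(ℤ_[p], ℚ_[p]) →L[ℚ_[p]] C(ℤ_[p], ℚ_[p]))
    (hH : ∀ (f : C(ℤ_[p], ℚ_[p])) (x : ℤ_[p]), H f x = aPlus p (aMinus p (⇑f)) x) :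
    spectrum ℚ_[p] H = Set.range (fun z : ℤ_[p] => (z : ℚ_[p])) :=
  subset_antisymm
    (PadicInt.spectrum_subset_range_coe_of_norm_le_one (a := H)
      (norm_le_one_of_apply_eq_aPlus_aMinus hH))
    (PadicInt.range_coe_subset_spectrum (a := H)
      (natCast_mem_spectrum_of_apply_eq_aPlus_aMinus hH))
end

section
/- (van der Put expansion) For every f ∈ C(ℤ_p, ℚ_p), the series Σ_{n=0}^∞ v_n·e_n converges uniformly (i.e. in sup-norm) to f, where v_0 = f(0) and, for n ≥ 1, v_n = f(n) − f(n_−). -/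
/-- The van der Put basis function `e_n : ℤ_[p] → ℚ_[p]`: `e_0 = 1` and, for `n ≥ 1`,
`e_n` is the characteristic function of the disc `D_n = {x ∈ ℤ_[p] : |x - n|_p < 1/n}`. -/
noncomputable def vdpE (p : ℕ) [Fact p.Prime] (n : ℕ) : ℤ_[p] → ℚ_[p] :=
  if n = 0 then fun _ => 1
  else Set.indicator {x : ℤ_[p] | ‖x - (n : ℤ_[p])‖ < 1 / (n : ℝ)} fun _ => 1

/-- For `n ≥ 1` with base-`p` expansion `n = n_0 + n_1 p + ⋯ + n_s p^s` (`n_s ≠ 0`),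
`n_- = n - n_s p^s`, i.e. the remainder of `n` modulo `p^s` where `p^s` is the largest
power of `p` with `p^s ≤ n`. -/
def nMinusDigit (p n : ℕ) : ℕ := n % p ^ Nat.log p n

/-- The van der Put coefficients: `v_0 = f(0)` and `v_n = f(n) - f(n_-)` for `n ≥ 1`. -/
noncomputable def vdpCoeff (p : ℕ) [Fact p.Prime] (f : ℤ_[p] → ℚ_[p]) (n : ℕ) : ℚ_[p] :=
  if n = 0 then f 0 else f (n : ℤ_[p]) - f ((nMinusDigit p n : ℕ) : ℤ_[p])

/-!
The truncations `x.appr k` of `x ∈ ℤ_[p]` form a nondecreasing sequence of naturals, and for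
`n ≥ 1` we have `x ∈ D_n` exactly when `n` is one of them; the truncation preceding `n` is then
`n_-`. Hence the partial sum `∑_{n ≤ N} v_n e_n(x)` telescopes to `f(t)`, where `t` is the
largest truncation of `x` not exceeding `N`. As `N → ∞`, `t → x` uniformly in `x`, and `f` is
uniformly continuous on the compact space `ℤ_[p]`.
-/

open Filter

namespace PadicInt

variable {p : ℕ} [Fact p.Prime]

lemma appr_zero (x : ℤ_[p]) : x.appr 0 = 0 :=
  Nat.lt_one_iff.mp (by simpa using x.appr_lt 0)

lemma appr_eq_iff_sub_mem_span {x : ℤ_[p]} {k n : ℕ} (hn : n < p ^ k) :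
    x.appr k = n ↔ x - n ∈ Ideal.span {(p : ℤ_[p]) ^ k} := by
  refine ⟨fun h => h ▸ x.appr_spec k, fun h => ?_⟩
  have := zmod_congr_of_sub_mem_span k x _ _ (x.appr_spec k) h
  rwa [ZMod.natCast_eq_natCast_iff, Nat.ModEq, Nat.mod_eq_of_lt (x.appr_lt k),
    Nat.mod_eq_of_lt hn] at this

lemma appr_eq_appr_mod (x : ℤ_[p]) {m n : ℕ} (h : m ≤ n) : x.appr m = x.appr n % p ^ m := by
  have := (Nat.modEq_iff_dvd' (x.appr_mono h)).mpr (x.dvd_appr_sub_appr m n h)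
  rwa [Nat.ModEq, Nat.mod_eq_of_lt (x.appr_lt m)] at this

lemma mem_range_appr_iff {x : ℤ_[p]} {n : ℕ} (hn : n ≠ 0) :
    n ∈ Set.range x.appr ↔ x.appr (Nat.log p n + 1) = n := by
  refine ⟨?_, fun h => ⟨_, h⟩⟩
  rintro ⟨j, rfl⟩
  have hj : Nat.log p (x.appr j) + 1 ≤ j := Nat.log_lt_of_lt_pow hn (x.appr_lt j)
  refine (appr_eq_iff_sub_mem_span (Nat.lt_pow_succ_log_self (Fact.out : p.Prime).one_lt _)).2 ?_
  exact Ideal.span_singleton_le_span_singleton.mpr (pow_dvd_pow _ hj) (x.appr_spec j)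

lemma norm_sub_natCast_lt_inv_iff {x : ℤ_[p]} {n : ℕ} (hn : n ≠ 0) :
    ‖x - n‖ < 1 / (n : ℝ) ↔ x.appr (Nat.log p n + 1) = n := by
  have hp : 1 < p := (Fact.out : p.Prime).one_lt
  set s := Nat.log p n
  have hn₀ : (0 : ℝ) < n := by exact_mod_cast Nat.pos_of_ne_zero hn
  rw [appr_eq_iff_sub_mem_span (Nat.lt_pow_succ_log_self hp n), ← norm_le_pow_iff_mem_span_pow]
  constructor
  · intro h
    have e : (-(s + 1 : ℕ) : ℤ) + 1 = -(s : ℤ) := by push_cast; ring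
    rw [norm_le_pow_iff_norm_lt_pow_add_one, e, zpow_neg, zpow_natCast]
    refine h.trans_le ?_
    rw [one_div, inv_le_inv₀ hn₀ (by positivity)]
    exact_mod_cast Nat.pow_log_le_self p hn
  · intro h
    refine h.trans_lt ?_
    rw [zpow_neg, zpow_natCast, one_div, inv_lt_inv₀ (by positivity) hn₀]
    exact_mod_cast Nat.lt_pow_succ_log_self hp n

section ApprFloor

open Classical

noncomputable def apprFloor (x : ℤ_[p]) (N : ℕ) : ℕ :=
  Nat.findGreatest (· ∈ Set.range x.appr) N

lemma apprFloor_zero (x : ℤ_[p]) : x.apprFloor 0 = 0 :=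
  Nat.findGreatest_zero

lemma apprFloor_succ (x : ℤ_[p]) (N : ℕ) :
    x.apprFloor (N + 1) = if N + 1 ∈ Set.range x.appr then N + 1 else x.apprFloor N :=
  Nat.findGreatest_succ N

lemma apprFloor_le (x : ℤ_[p]) (N : ℕ) : x.apprFloor N ≤ N :=
  Nat.findGreatest_le N

lemma apprFloor_mem_range (x : ℤ_[p]) (N : ℕ) : x.apprFloor N ∈ Set.range x.appr :=
  Nat.findGreatest_spec (Nat.zero_le N) ⟨0, x.appr_zero⟩

lemma le_apprFloor {x : ℤ_[p]} {m N : ℕ} (hm : m ≤ N) (h : m ∈ Set.range x.appr) :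
    m ≤ x.apprFloor N :=
  Nat.le_findGreatest hm h

lemma apprFloor_eq_nMinusDigit {x : ℤ_[p]} {N : ℕ} (h : N + 1 ∈ Set.range x.appr) :
    x.apprFloor N = nMinusDigit p (N + 1) := by
  set s := Nat.log p (N + 1)
  have hs : x.appr (s + 1) = N + 1 := (mem_range_appr_iff N.succ_ne_zero).1 h
  have hmod : x.appr s = (N + 1) % p ^ s := by rw [appr_eq_appr_mod x s.le_succ, hs]
  rw [nMinusDigit, ← hmod]
  refine le_antisymm ?_ (le_apprFloor ?_ ⟨s, rfl⟩)
  · obtain ⟨j, hj⟩ := x.apprFloor_mem_range N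
    have hjN : x.appr j ≤ N := hj ▸ x.apprFloor_le N
    rw [← hj]
    refine x.appr_mono (not_lt.1 fun hsj => ?_)
    have := x.appr_mono (show s + 1 ≤ j from hsj)
    omega
  · have : p ^ s ≤ N + 1 := Nat.pow_log_le_self p N.succ_ne_zero
    have := x.appr_lt s
    omega

lemma norm_sub_apprFloor_le (x : ℤ_[p]) {k N : ℕ} (hN : p ^ k ≤ N) :
    ‖x - x.apprFloor N‖ ≤ (p : ℝ) ^ (-(k : ℤ)) := by
  rw [norm_le_pow_iff_mem_span_pow]
  obtain ⟨j, hj⟩ := x.apprFloor_mem_range N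
  have hkj : x.appr k ≤ x.appr j :=
    hj ▸ le_apprFloor ((x.appr_lt k).le.trans hN) ⟨k, rfl⟩
  rw [← hj]
  rcases le_total k j with hle | hle
  · exact Ideal.span_singleton_le_span_singleton.mpr (pow_dvd_pow _ hle) (x.appr_spec j)
  · rw [le_antisymm (x.appr_mono hle) hkj]
    exact x.appr_spec k

lemma tendstoUniformly_apprFloor :
    TendstoUniformly (fun N (x : ℤ_[p]) => (x.apprFloor N : ℤ_[p])) id atTop := by
  rw [Metric.tendstoUniformly_iff]
  intro ε hε
  obtain ⟨k, hk⟩ := exists_pow_neg_lt p hε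
  filter_upwards [eventually_ge_atTop (p ^ k)] with N hN x
  rw [dist_eq_norm]
  exact (x.norm_sub_apprFloor_le hN).trans_lt hk

end ApprFloor

end PadicInt

section VanDerPut

variable {p : ℕ} [Fact p.Prime]

open Classical in
lemma vdpE_apply_of_ne_zero {n : ℕ} (hn : n ≠ 0) (x : ℤ_[p]) :
    vdpE p n x = if n ∈ Set.range x.appr then 1 else 0 := by
  simp only [vdpE, if_neg hn, Set.indicator_apply, Set.mem_ofPred_eq,
    PadicInt.norm_sub_natCast_lt_inv_iff hn, PadicInt.mem_range_appr_iff hn]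

lemma sum_range_succ_vdpCoeff_mul_vdpE (f : ℤ_[p] → ℚ_[p]) (x : ℤ_[p]) (N : ℕ) :
    ∑ n ∈ Finset.range (N + 1), vdpCoeff p f n * vdpE p n x = f (x.apprFloor N) := by
  induction N with
  | zero => simp [vdpCoeff, vdpE, PadicInt.apprFloor_zero]
  | succ N ih =>
    rw [Finset.sum_range_succ, ih, vdpE_apply_of_ne_zero N.succ_ne_zero, x.apprFloor_succ]
    split_ifs with h
    · rw [vdpCoeff, if_neg N.succ_ne_zero, PadicInt.apprFloor_eq_nMinusDigit h]
      push_cast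
      ring
    · rw [mul_zero, add_zero]

end VanDerPut

/-- (van der Put expansion) For every continuous `f : ℤ_[p] → ℚ_[p]`, the series
`Σ_{n=0}^∞ v_n e_n` converges uniformly (in sup-norm) to `f`. -/
theorem vanDerPut_expansion (p : ℕ) [Fact p.Prime] (f : C(ℤ_[p], ℚ_[p])) :
    TendstoUniformly
      (fun (N : ℕ) (x : ℤ_[p]) => ∑ n ∈ Finset.range N, vdpCoeff p (⇑f) n * vdpE p n x)
      (⇑f) Filter.atTop := by
  have hf : UniformContinuous f := CompactSpace.uniformContinuous_of_continuous f.continuous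
  have hfloor : TendstoUniformly (fun N x => f (x.apprFloor N)) f atTop :=
    hf.comp_tendstoUniformly PadicInt.tendstoUniformly_apprFloor
  have hshift : TendstoUniformly (fun N x => f (x.apprFloor (N - 1))) f atTop :=
    fun u hu => (tendsto_sub_atTop_nat 1).eventually (hfloor u hu)
  refine (tendstoUniformly_congr ?_).2 hshift
  filter_upwards [eventually_ge_atTop 1] with N hN
  funext x
  obtain ⟨M, rfl⟩ := Nat.exists_eq_add_of_le' hN
  exact sum_range_succ_vdpCoeff_mul_vdpE f x M
end
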